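/- For every real number a with 0 < a ≤ 1/4, the logarithmic derivative of the Riemann zeta function satisfies |ζ'(1 + a)/ζ(1 + a)| < 1/a + γ, where γ is the Euler–Mascheroni constant. -/

import Mathlib

/-!
Write `σ = 1 + a`. Comparing the Dirichlet series with the integrals of the antitone functions
`x ↦ x ^ (-σ)` on `[1, ∞)` and `x ↦ log x / x ^ σ` on `[3, ∞)` gives
`ζ(σ) ≥ ∫₁^∞ x ^ (-σ) dx = 1 / a` and
`|ζ'(σ)| ≤ ∑ log n / n ^ σ ≤ log 2 / 2 + log 3 / 3 + ∫₁^∞ log x / x ^ σ dx ≤ 7 / 6 + 1 / a ^ 2`,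
using `log x ≤ x - 1` for the two initial terms. Hence `|ζ'/ζ(σ)| ≤ 1 / a + 7 a / 6`,
and `7 a / 6 ≤ 7 / 24 < 1 / 2 < γ`.
-/

open Real Filter Topology MeasureTheory Set

namespace Real

variable {a : ℝ}

theorem hasDerivAt_neg_log_add_inv_div_rpow (ha : a ≠ 0) {x : ℝ} (hx : 0 < x) :
    HasDerivAt (fun x ↦ -(log x + a⁻¹) / (a * x ^ a)) (log x / x ^ (1 + a)) x := by
  have hxa : 0 < x ^ a := rpow_pos_of_pos hx a
  have h := ((hasDerivAt_log hx.ne').add_const a⁻¹).neg.div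
    ((hasDerivAt_rpow_const (p := a) (Or.inl hx.ne')).const_mul a) (mul_ne_zero ha hxa.ne')
  refine h.congr_deriv ?_
  simp only [Pi.neg_apply]
  rw [rpow_sub_one hx.ne', rpow_add hx, rpow_one]
  field_simp
  ring

theorem tendsto_neg_log_add_inv_div_rpow_atTop (ha : 0 < a) :
    Tendsto (fun x ↦ -(log x + a⁻¹) / (a * x ^ a)) atTop (𝓝 0) := by
  have hlog : Tendsto (fun x ↦ log x / x ^ a) atTop (𝓝 0) :=
    (isLittleO_log_rpow_atTop ha).tendsto_div_nhds_zero
  have hinv : Tendsto (fun x : ℝ ↦ (x ^ a)⁻¹) atTop (𝓝 0) :=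
    tendsto_inv_atTop_zero.comp (tendsto_rpow_atTop ha)
  have h := (hlog.add (hinv.const_mul a⁻¹)).neg.div_const a
  simp only [mul_zero, add_zero, neg_zero, zero_div] at h
  refine h.congr' (eventually_gt_atTop 0 |>.mono fun x hx ↦ ?_)
  have : x ^ a ≠ 0 := (rpow_pos_of_pos hx a).ne'
  field_simp

theorem log_div_rpow_nonneg (b : ℝ) {x : ℝ} (hx : 1 ≤ x) : 0 ≤ log x / x ^ b :=
  div_nonneg (log_nonneg hx) (rpow_nonneg (zero_le_one.trans hx) b)

theorem integrableOn_Ioi_one_log_div_rpow (ha : 0 < a) :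
    IntegrableOn (fun x ↦ log x / x ^ (1 + a)) (Ioi 1) :=
  integrableOn_Ioi_deriv_of_nonneg'
    (fun _ hx ↦ hasDerivAt_neg_log_add_inv_div_rpow ha.ne' (zero_lt_one.trans_le hx))
    (fun _ hx ↦ log_div_rpow_nonneg _ hx.out.le) (tendsto_neg_log_add_inv_div_rpow_atTop ha)

theorem integral_Ioi_one_log_div_rpow (ha : 0 < a) :
    ∫ x in Ioi 1, log x / x ^ (1 + a) = 1 / a ^ 2 := by
  rw [integral_Ioi_of_hasDerivAt_of_nonneg'
    (fun _ hx ↦ hasDerivAt_neg_log_add_inv_div_rpow ha.ne' (zero_lt_one.trans_le hx))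
    (fun _ hx ↦ log_div_rpow_nonneg _ hx.out.le) (tendsto_neg_log_add_inv_div_rpow_atTop ha)]
  field_simp
  simp

theorem antitoneOn_log_div_rpow (ha : 0 ≤ a) :
    AntitoneOn (fun x ↦ log x / x ^ (1 + a)) (Ici 3) := by
  refine (log_div_self_rpow_antitoneOn (by linarith)).mono (Ici_subset_Ici.mpr ?_)
  calc exp (1 + a)⁻¹ ≤ exp 1 := exp_le_exp.mpr (inv_le_one_of_one_le₀ (by linarith))
    _ ≤ 3 := exp_one_lt_d9.le.trans (by norm_num)

theorem log_div_rpow_le_one_sub_inv (ha : 0 ≤ a) {x : ℝ} (hx : 1 ≤ x) :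
    log x / x ^ (1 + a) ≤ 1 - x⁻¹ := by
  have hx0 : 0 < x := zero_lt_one.trans_le hx
  calc log x / x ^ (1 + a) ≤ log x / x := by
        gcongr
        · exact log_nonneg hx
        · simpa using rpow_le_rpow_of_exponent_le hx (by linarith : (1 : ℝ) ≤ 1 + a)
    _ ≤ (x - 1) / x := by gcongr; exact log_le_sub_one_of_pos hx0
    _ = 1 - x⁻¹ := by field_simp

theorem tsum_log_div_rpow_le (ha : 0 < a) :
    ∑' n : ℕ, log n / (n : ℝ) ^ (1 + a) ≤ 1 / a ^ 2 + 7 / 6 := by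
  set f : ℝ → ℝ := fun x ↦ log x / x ^ (1 + a)
  have hint := integrableOn_Ioi_one_log_div_rpow ha
  have hanti : AntitoneOn f (Ici ((3 : ℕ) : ℝ)) := by
    exact_mod_cast antitoneOn_log_div_rpow ha.le
  have hint3 : IntegrableOn f (Ioi ((3 : ℕ) : ℝ)) :=
    hint.mono_set (Ioi_subset_Ioi (by norm_num))
  have hnonneg3 : ∀ x ∈ Ioi ((3 : ℕ) : ℝ), 0 ≤ f x :=
    fun x hx ↦ log_div_rpow_nonneg _ (by norm_num at hx; linarith)
  have hsum : Summable (fun n : ℕ ↦ f n) := hanti.summable_of_integrableOn_Ioi hint3 hnonneg3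
  have hhead : ∑ n ∈ Finset.range 4, f n ≤ 7 / 6 := by
    have h2 := log_div_rpow_le_one_sub_inv ha.le (x := 2) (by norm_num)
    have h3 := log_div_rpow_le_one_sub_inv ha.le (x := 3) (by norm_num)
    simp only [Finset.sum_range_succ, Finset.range_zero, Finset.sum_empty, f]
    norm_num at h2 h3 ⊢
    linarith
  have htail : ∑' n : ℕ, f (n + 4 : ℕ) ≤ 1 / a ^ 2 :=
    calc ∑' n : ℕ, f (n + 4 : ℕ) ≤ ∫ x in Ioi ((3 : ℕ) : ℝ), f x :=
          hanti.tsum_comp_add_le_integral 3 hint3 hnonneg3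
      _ ≤ ∫ x in Ioi 1, f x :=
          setIntegral_mono_set hint
            (ae_restrict_of_forall_mem measurableSet_Ioi fun x hx ↦ log_div_rpow_nonneg _ hx.out.le)
            (Ioi_subset_Ioi (by norm_num)).eventuallyLE
      _ = 1 / a ^ 2 := integral_Ioi_one_log_div_rpow ha
  rw [← hsum.sum_add_tsum_nat_add 4]
  linarith

theorem one_div_le_tsum_one_div_rpow (ha : 0 < a) :
    1 / a ≤ ∑' n : ℕ, 1 / ((n : ℝ) + 1) ^ (1 + a) := by
  have hanti : AntitoneOn (fun x : ℝ ↦ x ^ (-(1 + a))) (Ici ((1 : ℕ) : ℝ)) :=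
    (antitoneOn_rpow_Ioi_of_exponent_nonpos (by linarith)).mono
      (Ici_subset_Ioi.mpr (by norm_num))
  have hsum : Summable (fun n : ℕ ↦ (n : ℝ) ^ (-(1 + a))) :=
    summable_nat_rpow.mpr (by linarith)
  have h := hanti.integral_le_tsum_comp_add 1 hsum
    (fun x hx ↦ rpow_nonneg (zero_le_one.trans (by exact_mod_cast hx.out.le)) _)
  rw [Nat.cast_one, integral_Ioi_rpow_of_lt (by linarith) one_pos] at h
  convert h using 1
  · rw [one_rpow, show -(1 + a) + 1 = -a by ring]
    field_simp
  · refine tsum_congr fun n ↦ ?_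
    push_cast
    rw [rpow_neg (by positivity), one_div]

end Real

theorem riemannZeta_ofReal_eq_tsum {σ : ℝ} (hσ : 1 < σ) :
    riemannZeta σ = ↑(∑' n : ℕ, 1 / ((n : ℝ) + 1) ^ σ) := by
  rw [zeta_eq_tsum_one_div_nat_add_one_cpow (by simpa using hσ), Complex.ofReal_tsum]
  refine tsum_congr fun n ↦ ?_
  rw [Complex.ofReal_div, Complex.ofReal_cpow (by positivity)]
  push_cast
  rfl

theorem norm_deriv_riemannZeta_le_tsum {s : ℂ} (hs : 1 < s.re) :
    ‖deriv riemannZeta s‖ ≤ ∑' n : ℕ, log n / (n : ℝ) ^ s.re := by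
  have hs' : LSeries.abscissaOfAbsConv 1 < s.re := by
    rw [LSeries.abscissaOfAbsConv_one]
    exact_mod_cast hs
  have hderiv : deriv riemannZeta s = -LSeries (LSeries.logMul 1) s := by
    rw [← LSeries_deriv hs']
    refine Filter.EventuallyEq.deriv_eq <| Filter.eventuallyEq_iff_exists_mem.mpr ?_
    exact ⟨{z | 1 < z.re}, (isOpen_lt continuous_const Complex.continuous_re).mem_nhds hs,
      fun _ hz ↦ (LSeries_one_eq_riemannZeta hz).symm⟩
  have hnorm : ∀ n : ℕ, ‖LSeries.term (LSeries.logMul 1) s n‖ = log n / (n : ℝ) ^ s.re := by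
    intro n
    rw [LSeries.norm_term_eq]
    split_ifs with hn
    · simp [hn]
    · simp [LSeries.logMul, ← Complex.natCast_log, abs_of_nonneg (log_natCast_nonneg n)]
  rw [hderiv, norm_neg, LSeries, ← tsum_congr hnorm]
  exact norm_tsum_le_tsum_norm (summable_norm_iff.mpr (LSeriesSummable_logMul_of_lt_re hs'))

theorem zeta_logDeriv_bound (a : ℝ) (ha₀ : 0 < a) (ha₁ : a ≤ 1 / 4) :
    ‖deriv riemannZeta (1 + (a : ℂ)) / riemannZeta (1 + (a : ℂ))‖ <
      1 / a + Real.eulerMascheroniConstant := by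
  have hs : 1 + (a : ℂ) = ((1 + a : ℝ) : ℂ) := by push_cast; rfl
  have hnum : ‖deriv riemannZeta (1 + (a : ℂ))‖ ≤ 1 / a ^ 2 + 7 / 6 := by
    refine (norm_deriv_riemannZeta_le_tsum (by simp [ha₀])).trans ?_
    simpa using tsum_log_div_rpow_le ha₀
  have hden := one_div_le_tsum_one_div_rpow ha₀
  rw [norm_div, hs, riemannZeta_ofReal_eq_tsum (by linarith), Complex.norm_real,
    norm_of_nonneg ((one_div_pos.mpr ha₀).le.trans hden), ← hs]
  calc _ ≤ (1 / a ^ 2 + 7 / 6) / (1 / a) :=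
        div_le_div₀ (by positivity) hnum (by positivity) hden
    _ = 1 / a + 7 * a / 6 := by field_simp
    _ < 1 / a + eulerMascheroniConstant := by
      linarith [one_half_lt_eulerMascheroniConstant]
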